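/- Let θ_0 ∈ ℝ^p. For each n, on a probability space (Ω_n, Pr_n), let M_n : ℝ^p × Ω_n → ℝ be a random function, Δ_n : Ω_n → ℝ^p random vectors, and J_n symmetric p×p matrices. Let θ̃_n be any random sequence with θ̃_n → θ_0 in Pr_n-probability, and write h̃_n = θ̃_n − θ_0. Suppose there exist random functions G_n, H_n : ℝ^p × Ω_n → ℝ, twice continuously differentiable in the first argument (and possibly depending on θ̃_n), such that: (i) sandwich: n(G_n(θ̃_n) − G_n(θ_0)) ≤ M_n(θ̃_n) − M_n(θ_0) ≤ n(H_n(θ̃_n) − H_n(θ_0)); (ii) for F ∈ {G_n, H_n}: (√n ∇_θ F(θ_0) − Δ_n)/(√n‖h̃_n‖ + 1) → 0 in Pr_n-probability; and (iii) for F ∈ {G_n, H_n} and every random sequence s_n with s_n → θ_0 in Pr_n-probability, ∇²_θ F(s_n) + J_n → 0 in Pr_n-probability. Then M_n(θ̃_n) − M_n(θ_0) = √n h̃_nᵀ Δ_n − ½ n h̃_nᵀ J_n h̃_n + R_n, where R_n/(√n‖h̃_n‖ + 1)² → 0 in Pr_n-probability. -/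

import Mathlib

open MeasureTheory Filter Topology RealInnerProductSpace Set
open scoped Gradient

/-!
For `F ∈ {Gₙ, Hₙ}`, Taylor's theorem with Lagrange remainder along the segment `[θ₀, θ̃ₙ]` writes
`n (F(θ̃ₙ) − F(θ₀)) − (√n h̃ₙᵀΔₙ − ½ n h̃ₙᵀJₙh̃ₙ)` as
`√n h̃ₙᵀ(√n ∇F(θ₀) − Δₙ) + ½ n h̃ₙᵀ(∇²F(sₙ) + Jₙ)h̃ₙ` for an intermediate point `sₙ`, which then
also tends to `θ₀` in probability. After division by `(√n‖h̃ₙ‖ + 1)²` this is bounded by the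
normalised gradient error plus `‖∇²F(sₙ) + Jₙ‖`, and both tend to `0` in probability by (ii) and
(iii). The sandwich (i) traps `Rₙ` between these two centred quantities for `Gₙ` and `Hₙ`.
-/

theorem exists_taylor_two_unitInterval {φ : ℝ → ℝ} (hφ : ContDiff ℝ 2 φ) :
    ∃ t ∈ Ioo (0 : ℝ) 1, φ 1 = φ 0 + deriv φ 0 + (1 / 2) * deriv (deriv φ) t := by
  obtain ⟨t, ht, h⟩ :=
    taylor_mean_remainder_lagrange_iteratedDeriv (n := 1) zero_ne_one hφ.contDiffOn
  have hd : derivWithin φ (Icc 0 1) 0 = deriv φ 0 :=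
    (hφ.differentiable two_ne_zero 0).derivWithin (uniqueDiffOn_Icc zero_lt_one 0 (by simp))
  refine ⟨t, by simpa using ht, ?_⟩
  norm_num [taylorWithinEval_succ, iteratedDeriv_succ, hd] at h
  linarith

section InnerProductSpace

variable {E : Type*} [NormedAddCommGroup E] [InnerProductSpace ℝ E] [CompleteSpace E]

theorem ContDiff.gradient {f : E → ℝ} {n : WithTop ℕ∞} (hf : ContDiff ℝ (n + 1) f) :
    ContDiff ℝ n (∇ f) :=
  (InnerProductSpace.toDual ℝ E).symm.contDiff.comp (hf.fderiv_right le_rfl)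

theorem exists_taylor_two_gradient {f : E → ℝ} (hf : ContDiff ℝ 2 f) (x h : E) :
    ∃ t ∈ Icc (0 : ℝ) 1, f (x + h) =
      f x + ⟪∇ f x, h⟫ + (1 / 2) * ⟪fderiv ℝ (∇ f) (x + t • h) h, h⟫ := by
  have hline (t : ℝ) : HasDerivAt (fun t : ℝ => x + t • h) h t := by
    simpa using ((hasDerivAt_id t).smul_const h).const_add x
  have hd1 : deriv (fun t : ℝ => f (x + t • h)) = fun t => ⟪∇ f (x + t • h), h⟫ := by
    funext t
    rw [inner_gradient_left]
    exact ((hf.differentiable two_ne_zero _).hasFDerivAt.comp_hasDerivAt t (hline t)).deriv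
  have hd2 (t : ℝ) : deriv (fun t : ℝ => ⟪∇ f (x + t • h), h⟫) t =
      ⟪fderiv ℝ (∇ f) (x + t • h) h, h⟫ := by
    have hgrad := (hf.gradient.differentiable one_ne_zero _).hasFDerivAt.comp_hasDerivAt t (hline t)
    simpa using (hgrad.inner ℝ (hasDerivAt_const t h)).deriv
  obtain ⟨t, ht, htaylor⟩ := exists_taylor_two_unitInterval (φ := fun t => f (x + t • h))
    (hf.comp (contDiff_const.add (contDiff_id.smul contDiff_const)))
  refine ⟨t, Ioo_subset_Icc_self ht, ?_⟩
  rw [hd1, hd2] at htaylor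
  simpa only [zero_smul, add_zero, one_smul] using htaylor

theorem exists_abs_quadratic_remainder_le {f : E → ℝ} (hf : ContDiff ℝ 2 f) (θ₀ θ Δ : E)
    (J : E →L[ℝ] E) {c : ℝ} (hc : 0 ≤ c) :
    ∃ s, ‖s - θ₀‖ ≤ ‖θ - θ₀‖ ∧
      |c ^ 2 * (f θ - f θ₀) - (c * ⟪θ - θ₀, Δ⟫ - (1 / 2) * c ^ 2 * ⟪θ - θ₀, J (θ - θ₀)⟫)| ≤
        c * ‖θ - θ₀‖ * ‖c • ∇ f θ₀ - Δ‖ +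
          (1 / 2) * (c * ‖θ - θ₀‖) ^ 2 * ‖fderiv ℝ (∇ f) s + J‖ := by
  obtain ⟨t, ht, htaylor⟩ := exists_taylor_two_gradient hf θ₀ (θ - θ₀)
  rw [add_sub_cancel] at htaylor
  generalize θ - θ₀ = h at htaylor ⊢
  refine ⟨θ₀ + t • h, ?_, ?_⟩
  · rw [add_sub_cancel_left, norm_smul, Real.norm_of_nonneg ht.1]
    exact mul_le_of_le_one_left (norm_nonneg h) ht.2
  set W := fderiv ℝ (∇ f) (θ₀ + t • h) + J
  have hremainder : c ^ 2 * (f θ - f θ₀) - (c * ⟪h, Δ⟫ - (1 / 2) * c ^ 2 * ⟪h, J h⟫) =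
      c * ⟪h, c • ∇ f θ₀ - Δ⟫ + (1 / 2) * c ^ 2 * ⟪W h, h⟫ := by
    rw [htaylor, add_apply, inner_add_left, inner_sub_right,
      real_inner_smul_right, real_inner_comm h (∇ f θ₀), real_inner_comm (J h) h]
    ring
  have hW : |⟪W h, h⟫| ≤ ‖W‖ * ‖h‖ ^ 2 :=
    calc |⟪W h, h⟫| ≤ ‖W h‖ * ‖h‖ := abs_real_inner_le_norm _ _
      _ ≤ ‖W‖ * ‖h‖ * ‖h‖ := by gcongr; exact W.le_opNorm h
      _ = ‖W‖ * ‖h‖ ^ 2 := by ring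
  rw [hremainder]
  calc |c * ⟪h, c • ∇ f θ₀ - Δ⟫ + (1 / 2) * c ^ 2 * ⟪W h, h⟫|
      ≤ |c * ⟪h, c • ∇ f θ₀ - Δ⟫| + |(1 / 2) * c ^ 2 * ⟪W h, h⟫| := abs_add_le _ _
    _ ≤ c * (‖h‖ * ‖c • ∇ f θ₀ - Δ‖) + (1 / 2) * c ^ 2 * (‖W‖ * ‖h‖ ^ 2) := by
      rw [abs_mul, abs_mul, abs_mul, abs_of_nonneg hc, abs_of_nonneg (sq_nonneg c),
        abs_of_nonneg (by norm_num : (0 : ℝ) ≤ 1 / 2)]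
      gcongr
      exact abs_real_inner_le_norm _ _
    _ = _ := by ring

theorem abs_div_add_one_sq_le {A b x y : ℝ} (hb : 0 ≤ b) (hx : 0 ≤ x) (hy : 0 ≤ y)
    (hA : |A| ≤ b * x + (1 / 2) * b ^ 2 * y) : |A / (b + 1) ^ 2| ≤ x / (b + 1) + y := by
  rw [abs_div, abs_of_pos (by positivity : (0 : ℝ) < (b + 1) ^ 2), div_le_iff₀ (by positivity)]
  calc |A| ≤ b * x + (1 / 2) * b ^ 2 * y := hA
    _ ≤ (b + 1) * x + (b + 1) ^ 2 * y := by nlinarith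
    _ = (x / (b + 1) + y) * (b + 1) ^ 2 := by field_simp

theorem exists_abs_quadratic_remainder_div_le {f : E → ℝ} (hf : ContDiff ℝ 2 f) (θ₀ θ Δ : E)
    (J : E →L[ℝ] E) {c : ℝ} (hc : 0 ≤ c) :
    ∃ s, ‖s - θ₀‖ ≤ ‖θ - θ₀‖ ∧
      |(c ^ 2 * (f θ - f θ₀) - (c * ⟪θ - θ₀, Δ⟫ - (1 / 2) * c ^ 2 * ⟪θ - θ₀, J (θ - θ₀)⟫)) /
          (c * ‖θ - θ₀‖ + 1) ^ 2| ≤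
        ‖(c * ‖θ - θ₀‖ + 1)⁻¹ • (c • ∇ f θ₀ - Δ)‖ + ‖fderiv ℝ (∇ f) s + J‖ := by
  obtain ⟨s, hs, hbound⟩ := exists_abs_quadratic_remainder_le hf θ₀ θ Δ J hc
  refine ⟨s, hs, ?_⟩
  rw [norm_smul, norm_inv, Real.norm_of_nonneg (by positivity), inv_mul_eq_div]
  exact abs_div_add_one_sq_le (by positivity) (norm_nonneg _) (norm_nonneg _) hbound

end InnerProductSpace

section ConvergenceInProbability

variable {Ω : ℕ → Type*} [∀ n, MeasurableSpace (Ω n)] {P : ∀ n, Measure (Ω n)}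

/-- Applied to `‖Xₙ‖`, this is convergence of `Xₙ` to `0` in probability; the sample space `Ω n`
may change with `n`. -/
def TendstoZeroInProbability (P : ∀ n, Measure (Ω n)) (X : ∀ n, Ω n → ℝ) : Prop :=
  ∀ ε > (0 : ℝ), Tendsto (fun n => P n {ω | ε < X n ω}) atTop (𝓝 0)

theorem TendstoZeroInProbability.mono {X Y : ∀ n, Ω n → ℝ} (hY : TendstoZeroInProbability P Y)
    (hXY : ∀ n ω, X n ω ≤ Y n ω) : TendstoZeroInProbability P X := fun ε hε =>
  tendsto_of_tendsto_of_tendsto_of_le_of_le tendsto_const_nhds (hY ε hε) (fun _ => zero_le)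
    fun n => measure_mono fun _ hω => hω.trans_le (hXY n _)

theorem TendstoZeroInProbability.add {X Y : ∀ n, Ω n → ℝ} (hX : TendstoZeroInProbability P X)
    (hY : TendstoZeroInProbability P Y) :
    TendstoZeroInProbability P fun n ω => X n ω + Y n ω := by
  intro ε hε
  have hsub (n : ℕ) :
      {ω | ε < X n ω + Y n ω} ⊆ {ω | ε / 2 < X n ω} ∪ {ω | ε / 2 < Y n ω} := by
    intro ω hω
    by_contra h
    simp only [mem_union, mem_ofPred_eq, not_or, not_lt] at h hω
    linarith
  have hsum := (hX _ (half_pos hε)).add (hY _ (half_pos hε))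
  rw [add_zero] at hsum
  exact tendsto_of_tendsto_of_tendsto_of_le_of_le tendsto_const_nhds hsum (fun _ => zero_le)
    fun n => (measure_mono (hsub n)).trans (measure_union_le _ _)

end ConvergenceInProbability

theorem stmt_14_general
    (d : ℕ) (θ0 : EuclideanSpace ℝ (Fin d))
    (Ω : ℕ → Type*) [∀ n, MeasurableSpace (Ω n)]
    (Pr : (n : ℕ) → Measure (Ω n))
    (M : (n : ℕ) → EuclideanSpace ℝ (Fin d) → Ω n → ℝ)
    (Δ : (n : ℕ) → Ω n → EuclideanSpace ℝ (Fin d))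
    (Jn : ℕ → Matrix (Fin d) (Fin d) ℝ)
    -- the random sequence θ̃ₙ → θ₀ in probability
    (θtil : (n : ℕ) → Ω n → EuclideanSpace ℝ (Fin d))
    (hθtil : ∀ ε > (0 : ℝ),
      Tendsto (fun n => Pr n {ω | ε < ‖θtil n ω - θ0‖}) atTop (𝓝 0))
    -- smooth random functions Gₙ, Hₙ
    (G H : (n : ℕ) → EuclideanSpace ℝ (Fin d) → Ω n → ℝ)
    (hGdiff : ∀ n ω, ContDiff ℝ 2 fun θ => G n θ ω)
    (hHdiff : ∀ n ω, ContDiff ℝ 2 fun θ => H n θ ω)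
    -- (i) sandwich
    (hsand : ∀ (n : ℕ) (ω : Ω n),
      (n : ℝ) * (G n (θtil n ω) ω - G n θ0 ω) ≤ M n (θtil n ω) ω - M n θ0 ω ∧
      M n (θtil n ω) ω - M n θ0 ω ≤ (n : ℝ) * (H n (θtil n ω) ω - H n θ0 ω))
    -- (ii) (√n ∇F(θ₀) − Δₙ)/(√n‖h̃ₙ‖ + 1) → 0 in probability, F ∈ {Gₙ, Hₙ}
    (hgradG : ∀ ε > (0 : ℝ),
      Tendsto (fun n => Pr n {ω | ε <
          ‖(Real.sqrt n * ‖θtil n ω - θ0‖ + 1)⁻¹ •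
            (Real.sqrt n • gradient (fun θ => G n θ ω) θ0 - Δ n ω)‖})
        atTop (𝓝 0))
    (hgradH : ∀ ε > (0 : ℝ),
      Tendsto (fun n => Pr n {ω | ε <
          ‖(Real.sqrt n * ‖θtil n ω - θ0‖ + 1)⁻¹ •
            (Real.sqrt n • gradient (fun θ => H n θ ω) θ0 - Δ n ω)‖})
        atTop (𝓝 0))
    -- (iii) ∇²F(sₙ) + Jₙ → 0 in probability for every random sₙ → θ₀, F ∈ {Gₙ, Hₙ}
    (hhessG : ∀ s : (n : ℕ) → Ω n → EuclideanSpace ℝ (Fin d),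
      (∀ ε > (0 : ℝ),
        Tendsto (fun n => Pr n {ω | ε < ‖s n ω - θ0‖}) atTop (𝓝 0)) →
      ∀ ε > (0 : ℝ),
        Tendsto (fun n => Pr n {ω | ε <
            ‖fderiv ℝ (gradient fun θ => G n θ ω) (s n ω) +
              Matrix.toEuclideanCLM (𝕜 := ℝ) (Jn n)‖})
          atTop (𝓝 0))
    (hhessH : ∀ s : (n : ℕ) → Ω n → EuclideanSpace ℝ (Fin d),
      (∀ ε > (0 : ℝ),
        Tendsto (fun n => Pr n {ω | ε < ‖s n ω - θ0‖}) atTop (𝓝 0)) →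
      ∀ ε > (0 : ℝ),
        Tendsto (fun n => Pr n {ω | ε <
            ‖fderiv ℝ (gradient fun θ => H n θ ω) (s n ω) +
              Matrix.toEuclideanCLM (𝕜 := ℝ) (Jn n)‖})
          atTop (𝓝 0)) :
    -- conclusion: Rₙ := Mₙ(θ̃ₙ) − Mₙ(θ₀) − (√n h̃ₙᵀΔₙ − ½ n h̃ₙᵀJₙh̃ₙ) satisfies
    -- Rₙ/(√n‖h̃ₙ‖ + 1)² → 0 in probability
    ∀ ε > (0 : ℝ),
      Tendsto (fun n => Pr n {ω | ε <
          |(M n (θtil n ω) ω - M n θ0 ω -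
            (Real.sqrt n * ⟪θtil n ω - θ0, Δ n ω⟫ -
              (1 / 2) * (n : ℝ) *
                ⟪θtil n ω - θ0,
                  (Matrix.toEuclideanCLM (𝕜 := ℝ) (Jn n)) (θtil n ω - θ0)⟫)) /
            (Real.sqrt n * ‖θtil n ω - θ0‖ + 1) ^ 2|})
        atTop (𝓝 0) := by
  choose sG hsG hG using fun n ω => exists_abs_quadratic_remainder_div_le (hGdiff n ω) θ0
    (θtil n ω) (Δ n ω) (Matrix.toEuclideanCLM (𝕜 := ℝ) (Jn n)) (Real.sqrt_nonneg n)
  choose sH hsH hH using fun n ω => exists_abs_quadratic_remainder_div_le (hHdiff n ω) θ0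
    (θtil n ω) (Δ n ω) (Matrix.toEuclideanCLM (𝕜 := ℝ) (Jn n)) (Real.sqrt_nonneg n)
  have hsG_tendsto : TendstoZeroInProbability Pr fun n ω => ‖sG n ω - θ0‖ :=
    TendstoZeroInProbability.mono hθtil hsG
  have hsH_tendsto : TendstoZeroInProbability Pr fun n ω => ‖sH n ω - θ0‖ :=
    TendstoZeroInProbability.mono hθtil hsH
  refine TendstoZeroInProbability.mono
    ((TendstoZeroInProbability.add hgradG (hhessG sG hsG_tendsto)).add
      (TendstoZeroInProbability.add hgradH (hhessH sH hsH_tendsto))) fun n ω => ?_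
  refine (abs_le_max_abs_abs ?_ ?_).trans
    ((max_le_add_of_nonneg (abs_nonneg _) (abs_nonneg _)).trans (add_le_add (hG n ω) (hH n ω)))
  all_goals
    rw [Real.sq_sqrt (Nat.cast_nonneg n)]
    gcongr
  exacts [(hsand n ω).1, (hsand n ω).2]

/-- Sandwich argument along a random sequence `θ̃ₙ → θ₀`: the criterion
difference `Mₙ(θ̃ₙ) − Mₙ(θ₀)` admits the quadratic expansion
`√n h̃ₙᵀΔₙ − ½ n h̃ₙᵀJₙh̃ₙ + Rₙ` with `Rₙ/(√n‖h̃ₙ‖ + 1)² → 0` in probability. -/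
theorem stmt_14
    (d : ℕ) (θ0 : EuclideanSpace ℝ (Fin d))
    (Ω : ℕ → Type*) [∀ n, MeasurableSpace (Ω n)]
    (Pr : (n : ℕ) → Measure (Ω n)) (hPr : ∀ n, IsProbabilityMeasure (Pr n))
    (M : (n : ℕ) → EuclideanSpace ℝ (Fin d) → Ω n → ℝ)
    (Δ : (n : ℕ) → Ω n → EuclideanSpace ℝ (Fin d))
    (Jn : ℕ → Matrix (Fin d) (Fin d) ℝ) (hJnsym : ∀ n, (Jn n).IsSymm)
    -- the random sequence θ̃ₙ → θ₀ in probability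
    (θtil : (n : ℕ) → Ω n → EuclideanSpace ℝ (Fin d))
    (hθtil : ∀ ε > (0 : ℝ),
      Tendsto (fun n => Pr n {ω | ε < ‖θtil n ω - θ0‖}) atTop (𝓝 0))
    -- smooth random functions Gₙ, Hₙ
    (G H : (n : ℕ) → EuclideanSpace ℝ (Fin d) → Ω n → ℝ)
    (hGdiff : ∀ n ω, ContDiff ℝ 2 fun θ => G n θ ω)
    (hHdiff : ∀ n ω, ContDiff ℝ 2 fun θ => H n θ ω)
    -- (i) sandwich
    (hsand : ∀ (n : ℕ) (ω : Ω n),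
      (n : ℝ) * (G n (θtil n ω) ω - G n θ0 ω) ≤ M n (θtil n ω) ω - M n θ0 ω ∧
      M n (θtil n ω) ω - M n θ0 ω ≤ (n : ℝ) * (H n (θtil n ω) ω - H n θ0 ω))
    -- (ii) (√n ∇F(θ₀) − Δₙ)/(√n‖h̃ₙ‖ + 1) → 0 in probability, F ∈ {Gₙ, Hₙ}
    (hgradG : ∀ ε > (0 : ℝ),
      Tendsto (fun n => Pr n {ω | ε <
          ‖(Real.sqrt n * ‖θtil n ω - θ0‖ + 1)⁻¹ •
            (Real.sqrt n • gradient (fun θ => G n θ ω) θ0 - Δ n ω)‖})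
        atTop (𝓝 0))
    (hgradH : ∀ ε > (0 : ℝ),
      Tendsto (fun n => Pr n {ω | ε <
          ‖(Real.sqrt n * ‖θtil n ω - θ0‖ + 1)⁻¹ •
            (Real.sqrt n • gradient (fun θ => H n θ ω) θ0 - Δ n ω)‖})
        atTop (𝓝 0))
    -- (iii) ∇²F(sₙ) + Jₙ → 0 in probability for every random sₙ → θ₀, F ∈ {Gₙ, Hₙ}
    (hhessG : ∀ s : (n : ℕ) → Ω n → EuclideanSpace ℝ (Fin d),
      (∀ ε > (0 : ℝ),
        Tendsto (fun n => Pr n {ω | ε < ‖s n ω - θ0‖}) atTop (𝓝 0)) →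
      ∀ ε > (0 : ℝ),
        Tendsto (fun n => Pr n {ω | ε <
            ‖fderiv ℝ (gradient fun θ => G n θ ω) (s n ω) +
              Matrix.toEuclideanCLM (𝕜 := ℝ) (Jn n)‖})
          atTop (𝓝 0))
    (hhessH : ∀ s : (n : ℕ) → Ω n → EuclideanSpace ℝ (Fin d),
      (∀ ε > (0 : ℝ),
        Tendsto (fun n => Pr n {ω | ε < ‖s n ω - θ0‖}) atTop (𝓝 0)) →
      ∀ ε > (0 : ℝ),
        Tendsto (fun n => Pr n {ω | ε <
            ‖fderiv ℝ (gradient fun θ => H n θ ω) (s n ω) +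
              Matrix.toEuclideanCLM (𝕜 := ℝ) (Jn n)‖})
          atTop (𝓝 0)) :
    -- conclusion: Rₙ := Mₙ(θ̃ₙ) − Mₙ(θ₀) − (√n h̃ₙᵀΔₙ − ½ n h̃ₙᵀJₙh̃ₙ) satisfies
    -- Rₙ/(√n‖h̃ₙ‖ + 1)² → 0 in probability
    ∀ ε > (0 : ℝ),
      Tendsto (fun n => Pr n {ω | ε <
          |(M n (θtil n ω) ω - M n θ0 ω -
            (Real.sqrt n * ⟪θtil n ω - θ0, Δ n ω⟫ -
              (1 / 2) * (n : ℝ) *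
                ⟪θtil n ω - θ0,
                  (Matrix.toEuclideanCLM (𝕜 := ℝ) (Jn n)) (θtil n ω - θ0)⟫)) /
            (Real.sqrt n * ‖θtil n ω - θ0‖ + 1) ^ 2|})
        atTop (𝓝 0) :=
  stmt_14_general d θ0 Ω Pr M Δ Jn θtil hθtil G H hGdiff hHdiff hsand hgradG hgradH hhessG hhessH
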